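/- With the set-up of the previous statement, for every $f\in X^*$ we have $\|f\| \le \theta(f)$; and if $\theta(f)<\infty$ then $\|f - h_m(f)\| \to 0$ as $m\to\infty$, where $h_m(f) = \sum_{k=1}^m q_k(f)\,\omega_k(f)$ and $\omega_k(f) = \sum_{\gamma\in G_k(f)} P_\gamma^* f / \|P_\gamma^* f\|$. -/

import Mathlib

open Filter
open scoped ENNReal NNReal

noncomputable section

variable {X : Type*} [NormedAddCommGroup X] [NormedSpace ℝ X] {Γ : Type*}

/-- The adjoint action: `P γ* f = f ∘ P γ`. -/
def Pstar (P : Γ → X →L[ℝ] X) (γ : Γ) (f : StrongDual ℝ X) : StrongDual ℝ X :=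
  f.comp (P γ)

/-- The range of `f`: the set of norms of its non-zero components. -/
def ranSet (P : Γ → X →L[ℝ] X) (f : StrongDual ℝ X) : Set ℝ :=
  {r | ∃ γ, Pstar P γ f ≠ 0 ∧ ‖Pstar P γ f‖ = r}

/-- `pfun P f k` is the `k`-th largest element of `ranSet P f` (for `k ≥ 1`),
with value `0` if fewer than `k` values exist (`sSup ∅ = 0` in `ℝ`). -/
def pfun (P : Γ → X →L[ℝ] X) (f : StrongDual ℝ X) : ℕ → ℝ
  | 0 => 0
  | 1 => sSup (ranSet P f)
  | (k + 2) => sSup {r | r ∈ ranSet P f ∧ r < pfun P f (k + 1)}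

/-- `qfun P f k = p_k(f) - p_{k+1}(f)`. -/
def qfun (P : Γ → X →L[ℝ] X) (f : StrongDual ℝ X) (k : ℕ) : ℝ :=
  pfun P f k - pfun P f (k + 1)

/-- `Gset P f k = {γ ∈ supp f : ‖P γ* f‖ ≥ p_k(f)}`. -/
def Gset (P : Γ → X →L[ℝ] X) (f : StrongDual ℝ X) (k : ℕ) : Set Γ :=
  {γ | Pstar P γ f ≠ 0 ∧ pfun P f k ≤ ‖Pstar P γ f‖}

/-- `rho P A`: the supremum, over finite subsets `S ⊆ A` and functionals `f` whose
components on `S` have norm at most `1`, of `‖∑_{γ ∈ S} P γ* f‖` (valued in `ℝ≥0∞`).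
For a finite set `A` this agrees with the quantity `ρ(A)` of the paper, since `ρ`
is increasing with respect to inclusion. -/
def rho (P : Γ → X →L[ℝ] X) (A : Set Γ) : ℝ≥0∞ :=
  ⨆ (S : Finset Γ) (_ : ↑S ⊆ A) (f : StrongDual ℝ X)
    (_ : ∀ γ ∈ S, ‖Pstar P γ f‖ ≤ 1), ENNReal.ofReal ‖∑ γ ∈ S, Pstar P γ f‖

/-- `theta P f = ∑_{k=1}^∞ q_k(f) ρ(G_k(f))`, valued in `ℝ≥0∞`. -/
def theta (P : Γ → X →L[ℝ] X) (f : StrongDual ℝ X) : ℝ≥0∞ :=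
  ∑' k : ℕ, ENNReal.ofReal (qfun P f (k + 1)) * rho P (Gset P f (k + 1))

end

/-!
Since the `P γ` are disjoint projections, `P γ*` acts diagonally on the functionals `P β* f`, so
the `γ`-component of `h_m(f)` is `c_m • P γ* f / ‖P γ* f‖`, where `c_m` telescopes to
`‖P γ* f‖ - p_{m+1}(f)` once `p_{m+1}(f) ≤ ‖P γ* f‖`. As `f` is a limit of functionals with
finitely many non-zero components, only finitely many components of `f` are large; hence the
`p_k(f)` enumerate the values `‖P γ* f‖` and tend to `0`, and every component of `h_m(f)`
converges to that of `f`. On the other hand `‖q_k ω_k‖ ≤ q_k ρ(G_k)`, so if `θ(f) < ∞` the series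
`∑ q_k ω_k` converges absolutely; its sum has the same components as `f`, so it is `f` because
the ranges of the `P γ` span a dense subspace. Finally `‖f‖ = lim ‖h_m(f)‖ ≤ θ(f)`.
-/

open Topology

lemma Real.sSup_mem_of_finite_setOf_le {S : Set ℝ} {ε : ℝ} (hε : 0 ≤ ε) (hlt : ε < sSup S)
    (hfin : {r ∈ S | ε ≤ r}.Finite) : sSup S ∈ S := by
  have hbdd : BddAbove S := by
    by_contra h
    rw [Real.sSup_of_not_bddAbove h] at hlt
    linarith
  have hne : S.Nonempty := by
    by_contra h
    rw [Set.not_nonempty_iff_eq_empty.mp h, Real.sSup_empty] at hlt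
    linarith
  obtain ⟨b, hbS, hb⟩ := exists_lt_of_lt_csSup hne hlt
  have hmem : sSup {r ∈ S | ε ≤ r} ∈ {r ∈ S | ε ≤ r} :=
    Set.Nonempty.csSup_mem ⟨b, hbS, hb.le⟩ hfin
  suffices sSup S = sSup {r ∈ S | ε ≤ r} from this ▸ hmem.1
  refine le_antisymm (csSup_le hne fun x hx => ?_) (csSup_le_csSup hbdd ⟨_, hmem⟩ fun r hr => hr.1)
  rcases le_or_gt ε x with h | h
  · exact le_csSup hfin.bddAbove ⟨hx, h⟩
  · exact h.le.trans hmem.2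

section Projections

variable {X : Type*} [NormedAddCommGroup X] [NormedSpace ℝ X] {Γ : Type*} (P : Γ → X →L[ℝ] X)

section Ranks

variable (f : StrongDual ℝ X)

lemma pos_of_mem_ranSet {r : ℝ} (hr : r ∈ ranSet P f) : 0 < r := by
  obtain ⟨γ, hγ, rfl⟩ := hr
  exact norm_pos_iff.mpr hγ

lemma finite_setOf_mem_ranSet_le
    (hfin : ∀ ε > 0, {γ | ε ≤ ‖Pstar P γ f‖}.Finite) (ε : ℝ) (hε : ε > 0) :
    {r ∈ ranSet P f | ε ≤ r}.Finite :=
  ((hfin ε hε).image fun γ => ‖Pstar P γ f‖).subset <| by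
    rintro r ⟨⟨γ, -, rfl⟩, hr⟩
    exact ⟨γ, hr, rfl⟩

lemma pfun_nonneg : ∀ k, 0 ≤ pfun P f k
  | 0 => le_rfl
  | 1 => Real.sSup_nonneg fun _ hr => (pos_of_mem_ranSet P f hr).le
  | _ + 2 => Real.sSup_nonneg fun _ hr => (pos_of_mem_ranSet P f hr.1).le

lemma pfun_add_two_le (k : ℕ) : pfun P f (k + 2) ≤ pfun P f (k + 1) :=
  Real.sSup_le (fun _ hr => hr.2.le) (pfun_nonneg P f (k + 1))

lemma antitone_pfun_add_one : Antitone fun k => pfun P f (k + 1) :=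
  antitone_nat_of_succ_le (pfun_add_two_le P f)

lemma qfun_add_one_nonneg (k : ℕ) : 0 ≤ qfun P f (k + 1) :=
  sub_nonneg.mpr (pfun_add_two_le P f k)

lemma sum_range_ite_qfun {v : ℝ} {j : ℕ} (hj : pfun P f (j + 1) = v)
    (hle : ∀ k, pfun P f (k + 1) ≤ v ↔ j ≤ k) (m : ℕ) :
    ∑ k ∈ Finset.range m, (if pfun P f (k + 1) ≤ v then qfun P f (k + 1) else 0) =
      v - pfun P f (max j m + 1) := by
  induction m with
  | zero => simp [hj]
  | succ m ih =>
    rw [Finset.sum_range_succ, ih]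
    by_cases hjm : j ≤ m
    · rw [if_pos ((hle m).mpr hjm), max_eq_right hjm, max_eq_right (by omega), qfun]
      ring
    · rw [if_neg (fun h => hjm ((hle m).mp h)), max_eq_left (by omega), max_eq_left (by omega),
        add_zero]

variable {f} (hfin : ∀ ε > 0, {r ∈ ranSet P f | ε ≤ r}.Finite)
include hfin

lemma bddAbove_ranSet : BddAbove (ranSet P f) := by
  obtain ⟨M, hM⟩ := (hfin 1 one_pos).bddAbove
  refine ⟨max M 1, fun r hr => ?_⟩
  rcases le_or_gt 1 r with h | h
  · exact (hM ⟨hr, h⟩).trans (le_max_left _ _)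
  · exact h.le.trans (le_max_right _ _)

lemma pfun_add_two_mem_and_lt {k : ℕ} (hpos : 0 < pfun P f (k + 2)) :
    pfun P f (k + 2) ∈ ranSet P f ∧ pfun P f (k + 2) < pfun P f (k + 1) :=
  Real.sSup_mem_of_finite_setOf_le (half_pos hpos).le (half_lt_self hpos)
    ((hfin _ (half_pos hpos)).subset fun _ hr => ⟨hr.1.1, hr.2⟩)

lemma tendsto_pfun : Tendsto (pfun P f) atTop (𝓝 0) := by
  rw [← Filter.tendsto_add_atTop_iff_nat 1]
  have hbdd : BddBelow (Set.range fun k => pfun P f (k + 1)) :=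
    ⟨0, by rintro _ ⟨k, rfl⟩; exact pfun_nonneg P f _⟩
  suffices hL : ⨅ k, pfun P f (k + 1) = 0 from
    hL ▸ tendsto_atTop_ciInf (antitone_pfun_add_one P f) hbdd
  by_contra hL
  set L := ⨅ k, pfun P f (k + 1)
  have hLpos : 0 < L := (le_ciInf fun k => pfun_nonneg P f _).lt_of_ne' hL
  have hLle : ∀ k, L ≤ pfun P f (k + 1) := ciInf_le hbdd
  have hstep k := pfun_add_two_mem_and_lt P hfin (hLpos.trans_le (hLle (k + 1)))
  -- infinitely many distinct values of `ranSet P f` would lie above `L`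
  have hanti : StrictAnti fun k => pfun P f (k + 2) :=
    strictAnti_nat_of_succ_lt fun k => (hstep (k + 1)).2
  exact Set.infinite_of_injective_forall_mem (s := {r ∈ ranSet P f | L ≤ r}) hanti.injective
    (fun k => ⟨(hstep k).1, hLle (k + 1)⟩) (hfin L hLpos)

lemma exists_pfun_eq_of_mem_ranSet {v : ℝ} (hv : v ∈ ranSet P f) :
    ∃ j, pfun P f (j + 1) = v ∧ ∀ k, pfun P f (k + 1) ≤ v ↔ j ≤ k := by
  have hex : ∃ k, pfun P f (k + 1) ≤ v :=
    (((tendsto_pfun P hfin).comp (tendsto_add_atTop_nat 1)).eventually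
      (ge_mem_nhds (pos_of_mem_ranSet P f hv))).exists
  classical
  obtain ⟨j, hj, hmin⟩ : ∃ j, pfun P f (j + 1) ≤ v ∧ ∀ k < j, v < pfun P f (k + 1) :=
    ⟨Nat.find hex, Nat.find_spec hex, fun k hk => not_le.mp (Nat.find_min hex hk)⟩
  refine ⟨j, le_antisymm hj ?_, fun k => ⟨fun hk => not_lt.mp fun hkj => ?_,
    fun hjk => (antitone_pfun_add_one P f hjk).trans hj⟩⟩
  · cases j with
    | zero => exact le_csSup (bddAbove_ranSet P hfin) hv
    | succ i =>
      exact le_csSup ((bddAbove_ranSet P hfin).mono fun _ hr => hr.1) ⟨hv, hmin i i.lt_succ_self⟩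
  · exact (hmin k hkj).not_ge hk

lemma tendsto_sum_range_ite_qfun {v : ℝ} (hv : v ∈ ranSet P f) :
    Tendsto (fun m => ∑ k ∈ Finset.range m, if pfun P f (k + 1) ≤ v then qfun P f (k + 1) else 0)
      atTop (𝓝 v) := by
  obtain ⟨j, hj, hle⟩ := exists_pfun_eq_of_mem_ranSet P hfin hv
  have htail : Tendsto (fun m => pfun P f (max j m + 1)) atTop (𝓝 0) :=
    (tendsto_pfun P hfin).comp
      (tendsto_atTop_mono (fun m => (le_max_right j m).trans (Nat.le_succ _)) tendsto_id)
  simpa [sum_range_ite_qfun P f hj hle] using tendsto_const_nhds.sub htail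

end Ranks

section Components

lemma continuous_Pstar (γ : Γ) : Continuous (Pstar P γ) :=
  (ContinuousLinearMap.precomp ℝ (P γ)).continuous

lemma Pstar_add (γ : Γ) (g g' : StrongDual ℝ X) :
    Pstar P γ (g + g') = Pstar P γ g + Pstar P γ g' :=
  map_add (ContinuousLinearMap.precomp ℝ (P γ)) g g'

lemma Pstar_sub (γ : Γ) (g g' : StrongDual ℝ X) :
    Pstar P γ (g - g') = Pstar P γ g - Pstar P γ g' :=
  map_sub (ContinuousLinearMap.precomp ℝ (P γ)) g g'

lemma Pstar_smul (γ : Γ) (c : ℝ) (g : StrongDual ℝ X) : Pstar P γ (c • g) = c • Pstar P γ g :=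
  map_smul (ContinuousLinearMap.precomp ℝ (P γ)) c g

lemma Pstar_sum {ι : Type*} (γ : Γ) (S : Finset ι) (g : ι → StrongDual ℝ X) :
    Pstar P γ (∑ i ∈ S, g i) = ∑ i ∈ S, Pstar P γ (g i) :=
  map_sum (ContinuousLinearMap.precomp ℝ (P γ)) g S

variable {P}

lemma exists_finset_Pstar_eq_zero_of_mem_span (hdisj : ∀ α β, α ≠ β → (P α).comp (P β) = 0)
    {g : StrongDual ℝ X}
    (hg : g ∈ Submodule.span ℝ (⋃ γ, Set.range fun f : StrongDual ℝ X => f.comp (P γ))) :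
    ∃ T : Finset Γ, ∀ γ ∉ T, Pstar P γ g = 0 := by
  classical
  induction hg using Submodule.span_induction with
  | mem x hx =>
    obtain ⟨_, ⟨β, rfl⟩, g, rfl⟩ := hx
    refine ⟨{β}, fun γ hγ => ?_⟩
    rw [Pstar, ContinuousLinearMap.comp_assoc, hdisj β γ (by simpa [eq_comm] using hγ),
      ContinuousLinearMap.comp_zero]
  | zero => exact ⟨∅, fun γ _ => ContinuousLinearMap.zero_comp _⟩
  | add x y _ _ hx hy =>
    obtain ⟨T, hT⟩ := hx
    obtain ⟨T', hT'⟩ := hy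
    refine ⟨T ∪ T', fun γ hγ => ?_⟩
    rw [Finset.mem_union, not_or] at hγ
    rw [Pstar_add, hT γ hγ.1, hT' γ hγ.2, add_zero]
  | smul a x _ hx =>
    obtain ⟨T, hT⟩ := hx
    exact ⟨T, fun γ hγ => by rw [Pstar_smul, hT γ hγ, smul_zero]⟩

lemma finite_setOf_le_norm_Pstar (hdisj : ∀ α β, α ≠ β → (P α).comp (P β) = 0)
    {C : ℝ} (hC : ∀ γ, ‖P γ‖ ≤ C)
    (hspan_dual : (Submodule.span ℝ
        (⋃ γ, Set.range (fun f : StrongDual ℝ X => f.comp (P γ)))).topologicalClosure = ⊤)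
    (f : StrongDual ℝ X) (ε : ℝ) (hε : ε > 0) :
    {γ | ε ≤ ‖Pstar P γ f‖}.Finite := by
  set D := max C 1
  have hD : 0 < D := one_pos.trans_le (le_max_right _ _)
  obtain ⟨g, hg, hfg⟩ := Metric.mem_closure_iff.mp
    (Submodule.dense_iff_topologicalClosure_eq_top.mpr hspan_dual f) (ε / D) (div_pos hε hD)
  obtain ⟨T, hT⟩ := exists_finset_Pstar_eq_zero_of_mem_span hdisj hg
  refine T.finite_toSet.subset fun γ hγ => not_not.mp fun hγT => ?_
  have hsmall : ‖Pstar P γ f‖ ≤ ‖f - g‖ * D :=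
    calc ‖Pstar P γ f‖ = ‖Pstar P γ (f - g)‖ := by
          rw [Pstar_sub, hT γ hγT, sub_zero]
      _ ≤ ‖f - g‖ * ‖P γ‖ := ContinuousLinearMap.opNorm_comp_le _ _
      _ ≤ ‖f - g‖ * D := by gcongr; exact (hC γ).trans (le_max_left _ _)
  have hfg' : ‖f - g‖ * D < ε := (lt_div_iff₀ hD).mp (dist_eq_norm f g ▸ hfg)
  exact (hγ.trans hsmall).not_gt hfg'

lemma eq_of_forall_Pstar_eq
    (hspanX : (Submodule.span ℝ (⋃ γ, Set.range (P γ))).topologicalClosure = ⊤)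
    {g g' : StrongDual ℝ X} (h : ∀ γ, Pstar P γ g = Pstar P γ g') : g = g' :=
  ContinuousLinearMap.ext_on (Submodule.dense_iff_topologicalClosure_eq_top.mpr hspanX) <| by
    rintro _ ⟨_, ⟨γ, rfl⟩, x, rfl⟩
    exact congr($(h γ) x)

variable [DecidableEq Γ] (hproj : ∀ γ, (P γ).comp (P γ) = P γ)
  (hdisj : ∀ α β, α ≠ β → (P α).comp (P β) = 0)
include hproj hdisj

lemma Pstar_Pstar (f : StrongDual ℝ X) (β γ : Γ) :
    Pstar P γ (Pstar P β f) = if β = γ then Pstar P γ f else 0 := by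
  change f.comp ((P β).comp (P γ)) = _
  split_ifs with h
  · rw [h, hproj]; rfl
  · rw [hdisj β γ h, ContinuousLinearMap.comp_zero]

lemma Pstar_sum_smul_Pstar (f : StrongDual ℝ X) (S : Finset Γ) (c : Γ → ℝ) (γ : Γ) :
    Pstar P γ (∑ β ∈ S, c β • Pstar P β f) = if γ ∈ S then c γ • Pstar P γ f else 0 := by
  simp only [Pstar_sum, Pstar_smul, Pstar_Pstar hproj hdisj, smul_ite, smul_zero]
  exact Finset.sum_ite_eq' S γ _

end Components

/-- The functional `ω` of the paper attached to the index set `S`; `ω_k(f)` is the case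
`S = G_k(f)`. -/
noncomputable def normalizedSum (f : StrongDual ℝ X) (S : Finset Γ) : StrongDual ℝ X :=
  ∑ γ ∈ S, ‖Pstar P γ f‖⁻¹ • Pstar P γ f

section Approximation

variable {P} (hproj : ∀ γ, (P γ).comp (P γ) = P γ) (hdisj : ∀ α β, α ≠ β → (P α).comp (P β) = 0)
  {f : StrongDual ℝ X}
include hproj hdisj

lemma ofReal_norm_normalizedSum_le_rho {S : Finset Γ} {A : Set Γ} (hSA : ↑S ⊆ A)
    (hS : ∀ γ ∈ S, Pstar P γ f ≠ 0) :
    ENNReal.ofReal ‖normalizedSum P f S‖ ≤ rho P A := by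
  classical
  have hcomp : ∀ γ ∈ S, Pstar P γ (normalizedSum P f S) = ‖Pstar P γ f‖⁻¹ • Pstar P γ f :=
    fun γ hγ => by rw [normalizedSum, Pstar_sum_smul_Pstar hproj hdisj, if_pos hγ]
  have hsum : ∑ γ ∈ S, Pstar P γ (normalizedSum P f S) = normalizedSum P f S :=
    Finset.sum_congr rfl hcomp
  refine hsum ▸ le_iSup₂_of_le S hSA (le_iSup₂_of_le (normalizedSum P f S) (fun γ hγ => ?_) le_rfl)
  rw [hcomp γ hγ, norm_smul, norm_inv, norm_norm, inv_mul_cancel₀ (norm_ne_zero_iff.mpr (hS γ hγ))]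

variable (hGfin : ∀ k : ℕ, (Gset P f (k + 1)).Finite)

lemma ofReal_qfun_mul_norm_normalizedSum_le (k : ℕ) :
    ENNReal.ofReal (qfun P f (k + 1) * ‖normalizedSum P f (hGfin k).toFinset‖) ≤
      ENNReal.ofReal (qfun P f (k + 1)) * rho P (Gset P f (k + 1)) := by
  rw [ENNReal.ofReal_mul' (norm_nonneg _)]
  gcongr
  exact ofReal_norm_normalizedSum_le_rho hproj hdisj (by simp)
    fun γ hγ => ((hGfin k).mem_toFinset.mp hγ).1

lemma ofReal_norm_sum_le_theta (m : ℕ) :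
    ENNReal.ofReal ‖∑ k ∈ Finset.range m, qfun P f (k + 1) • normalizedSum P f (hGfin k).toFinset‖
      ≤ theta P f :=
  calc _ ≤ ENNReal.ofReal
        (∑ k ∈ Finset.range m, qfun P f (k + 1) * ‖normalizedSum P f (hGfin k).toFinset‖) :=
        ENNReal.ofReal_le_ofReal <| norm_sum_le_of_le _ fun k _ => by
          rw [norm_smul, Real.norm_of_nonneg (qfun_add_one_nonneg P f k)]
    _ = ∑ k ∈ Finset.range m,
          ENNReal.ofReal (qfun P f (k + 1) * ‖normalizedSum P f (hGfin k).toFinset‖) :=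
        ENNReal.ofReal_sum_of_nonneg fun k _ =>
          mul_nonneg (qfun_add_one_nonneg P f k) (norm_nonneg _)
    _ ≤ ∑ k ∈ Finset.range m, ENNReal.ofReal (qfun P f (k + 1)) * rho P (Gset P f (k + 1)) :=
        Finset.sum_le_sum fun k _ => ofReal_qfun_mul_norm_normalizedSum_le hproj hdisj hGfin k
    _ ≤ theta P f := ENNReal.sum_le_tsum _

lemma summable_qfun_smul_normalizedSum (hθ : theta P f ≠ ⊤) :
    Summable fun k => qfun P f (k + 1) • normalizedSum P f (hGfin k).toFinset := by
  have hnorms : ∑' k, ENNReal.ofReal (qfun P f (k + 1) * ‖normalizedSum P f (hGfin k).toFinset‖)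
      ≠ ⊤ :=
    ne_top_of_le_ne_top hθ
      (ENNReal.tsum_le_tsum (ofReal_qfun_mul_norm_normalizedSum_le hproj hdisj hGfin))
  refine Summable.of_norm_bounded (ENNReal.summable_toReal hnorms) fun k => ?_
  rw [ENNReal.toReal_ofReal (mul_nonneg (qfun_add_one_nonneg P f k) (norm_nonneg _)), norm_smul,
    Real.norm_of_nonneg (qfun_add_one_nonneg P f k)]

lemma Pstar_sum_qfun_smul_normalizedSum (m : ℕ) (γ : Γ) :
    Pstar P γ (∑ k ∈ Finset.range m, qfun P f (k + 1) • normalizedSum P f (hGfin k).toFinset) =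
      (∑ k ∈ Finset.range m,
        if pfun P f (k + 1) ≤ ‖Pstar P γ f‖ then qfun P f (k + 1) else 0) •
      ‖Pstar P γ f‖⁻¹ • Pstar P γ f := by
  classical
  rw [Pstar_sum, Finset.sum_smul]
  refine Finset.sum_congr rfl fun k _ => ?_
  rw [Pstar_smul, normalizedSum, Pstar_sum_smul_Pstar hproj hdisj]
  by_cases h0 : Pstar P γ f = 0
  · simp [h0]
  · have hmem : γ ∈ (hGfin k).toFinset ↔ pfun P f (k + 1) ≤ ‖Pstar P γ f‖ :=
      (hGfin k).mem_toFinset.trans (and_iff_right h0)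
    simp only [hmem]
    split_ifs <;> simp

lemma tendsto_Pstar_sum_qfun_smul_normalizedSum
    (hfin : ∀ ε > 0, {r ∈ ranSet P f | ε ≤ r}.Finite) (γ : Γ) :
    Tendsto (fun m => Pstar P γ
        (∑ k ∈ Finset.range m, qfun P f (k + 1) • normalizedSum P f (hGfin k).toFinset))
      atTop (𝓝 (Pstar P γ f)) := by
  simp_rw [Pstar_sum_qfun_smul_normalizedSum hproj hdisj hGfin]
  by_cases h0 : Pstar P γ f = 0
  · simp [h0]
  · have := (tendsto_sum_range_ite_qfun P hfin ⟨γ, h0, rfl⟩).smul_const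
      (‖Pstar P γ f‖⁻¹ • Pstar P γ f)
    rwa [smul_smul, mul_inv_cancel₀ (norm_ne_zero_iff.mpr h0), one_smul] at this

end Approximation

end Projections

theorem norm_le_theta_and_hm_approx_general
    {X : Type*} [NormedAddCommGroup X] [NormedSpace ℝ X]
    {Γ : Type*} (P : Γ → X →L[ℝ] X)
    (hproj : ∀ γ, (P γ).comp (P γ) = P γ)
    (hdisj : ∀ α β, α ≠ β → (P α).comp (P β) = 0)
    (hbdd : ∃ C : ℝ, ∀ γ, ‖P γ‖ ≤ C)
    (hspanX : (Submodule.span ℝ (⋃ γ, Set.range (P γ))).topologicalClosure = ⊤)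
    (hspan_dual : (Submodule.span ℝ
        (⋃ γ, Set.range (fun f : StrongDual ℝ X => f.comp (P γ)))).topologicalClosure = ⊤)
    (f : StrongDual ℝ X)
    (hGfin : ∀ k : ℕ, (Gset P f (k + 1)).Finite)
    (omega : ℕ → StrongDual ℝ X)
    (homega : ∀ k : ℕ,
      omega k = ∑ γ ∈ (hGfin k).toFinset, ‖Pstar P γ f‖⁻¹ • Pstar P γ f)
    (h : ℕ → StrongDual ℝ X)
    (hh : ∀ m : ℕ, h m = ∑ k ∈ Finset.range m, qfun P f (k + 1) • omega k) :
    ENNReal.ofReal ‖f‖ ≤ theta P f ∧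
      (theta P f ≠ ⊤ → Tendsto (fun m : ℕ => ‖f - h m‖) atTop (nhds 0)) := by
  obtain ⟨C, hC⟩ := hbdd
  have hfin := finite_setOf_mem_ranSet_le P f (finite_setOf_le_norm_Pstar hdisj hC hspan_dual f)
  obtain rfl : omega = fun k => normalizedSum P f (hGfin k).toFinset := funext homega
  have hh' : h = fun m =>
      ∑ k ∈ Finset.range m, qfun P f (k + 1) • normalizedSum P f (hGfin k).toFinset := funext hh
  have hbound : ∀ m, ENNReal.ofReal ‖h m‖ ≤ theta P f :=
    fun m => hh m ▸ ofReal_norm_sum_le_theta hproj hdisj hGfin m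
  have hlim : theta P f ≠ ⊤ → Tendsto h atTop (𝓝 f) := fun hθ => by
    obtain ⟨F, hF⟩ := summable_qfun_smul_normalizedSum hproj hdisj hGfin hθ
    suffices hFf : F = f from hh' ▸ hFf ▸ hF.tendsto_sum_nat
    refine eq_of_forall_Pstar_eq hspanX fun γ => tendsto_nhds_unique ?_
      (tendsto_Pstar_sum_qfun_smul_normalizedSum hproj hdisj hGfin hfin γ)
    exact ((continuous_Pstar P γ).tendsto F).comp hF.tendsto_sum_nat
  refine ⟨?_, fun hθ => ?_⟩
  · rcases eq_or_ne (theta P f) ⊤ with hθ | hθ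
    · exact hθ ▸ le_top
    · exact le_of_tendsto' ((ENNReal.continuous_ofReal.tendsto _).comp (hlim hθ).norm) hbound
  · simpa only [norm_sub_rev] using tendsto_iff_norm_sub_tendsto_zero.mp (hlim hθ)

/-- For every `f ∈ X*` we have `‖f‖ ≤ θ(f)`, and if `θ(f) < ∞` then `‖f - h_m(f)‖ → 0`,
where `h_m(f) = ∑_{k=1}^m q_k(f) ω_k(f)` and `ω_k(f) = ∑_{γ ∈ G_k(f)} P γ* f / ‖P γ* f‖`. -/
theorem norm_le_theta_and_hm_approx
    {X : Type*} [NormedAddCommGroup X] [NormedSpace ℝ X] [CompleteSpace X]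
    {Γ : Type*} (P : Γ → X →L[ℝ] X)
    (hproj : ∀ γ, (P γ).comp (P γ) = P γ)
    (hne : ∀ γ, P γ ≠ 0)
    (hdisj : ∀ α β, α ≠ β → (P α).comp (P β) = 0)
    (hbdd : ∃ C : ℝ, ∀ γ, ‖P γ‖ ≤ C)
    (hspanX : (Submodule.span ℝ (⋃ γ, Set.range (P γ))).topologicalClosure = ⊤)
    (hspan_dual : (Submodule.span ℝ
        (⋃ γ, Set.range (fun f : StrongDual ℝ X => f.comp (P γ)))).topologicalClosure = ⊤)
    (f : StrongDual ℝ X)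
    (hGfin : ∀ k : ℕ, (Gset P f (k + 1)).Finite)
    (omega : ℕ → StrongDual ℝ X)
    (homega : ∀ k : ℕ,
      omega k = ∑ γ ∈ (hGfin k).toFinset, ‖Pstar P γ f‖⁻¹ • Pstar P γ f)
    (h : ℕ → StrongDual ℝ X)
    (hh : ∀ m : ℕ, h m = ∑ k ∈ Finset.range m, qfun P f (k + 1) • omega k) :
    ENNReal.ofReal ‖f‖ ≤ theta P f ∧
      (theta P f ≠ ⊤ → Tendsto (fun m : ℕ => ‖f - h m‖) atTop (nhds 0)) :=
  norm_le_theta_and_hm_approx_general P hproj hdisj hbdd hspanX hspan_dual f hGfin omega homega h hh
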